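/- arXiv:2407.15198 — 2 statements merged into one kernel-verified Lean document; each statement's English description precedes it below -/
import Mathlib

section
/- In the Strings and Coins game played on the cycle graph C_n (n ≥ 3), the second player wins, capturing all n vertices: the final score is (0, n). -/
/-- A position in Strings and Coins: a finite multigraph, with vertex set `verts`
and a multiset of (possibly loop) edges, each given as an ordered pair. -/
structure SCPos (V : Type) where
  verts : Finset V
  edges : Multiset (V × V)

variable {V : Type} [DecidableEq V]

/-- Number of edges incident to `v` (each edge, including a loop, counted once);
only being zero or nonzero matters for captures. -/
def SCPos.deg (p : SCPos V) (v : V) : ℕ :=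
  (p.edges.filter (fun f => f.1 = v ∨ f.2 = v)).card

/-- Degree of `v`, where a loop at `v` contributes 2. -/
def SCPos.degree (p : SCPos V) (v : V) : ℕ :=
  (p.edges.map (fun e => (if e.1 = v then 1 else 0) + (if e.2 = v then 1 else 0))).sum

/-- The position obtained by removing one copy of edge `e`. -/
def SCPos.remove (p : SCPos V) (e : V × V) : SCPos V :=
  ⟨p.verts, p.edges.erase e⟩

/-- The number of vertices captured by removing edge `e` from `p`:
endpoints of `e` whose degree drops to zero. -/
def SCPos.caps (p : SCPos V) (e : V × V) : ℕ :=
  (p.verts.filter (fun v => (v = e.1 ∨ v = e.2) ∧ (p.remove e).deg v = 0)).card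

/-- Optimal score `(mover's points, opponent's points)` of Strings and Coins,
under play where each player maximizes their own number of captured vertices.
A player who captures at least one vertex moves again. -/
noncomputable def SCPos.score (p : SCPos V) : ℕ × ℕ :=
  if h : p.edges = 0 then (0, 0)
  else
    (p.edges.toList.attach.map (fun ⟨e, he⟩ =>
      let s := (p.remove e).score
      let c := p.caps e
      if c = 0 then (s.2, s.1) else (s.1 + c, s.2))).foldl
      (fun best o => if best.1 ≤ o.1 then o else best) (0, 0)
termination_by p.edges.card
decreasing_by
  exact Multiset.card_erase_lt_of_mem (Multiset.mem_toList.mp he)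

/-- The cycle graph `C_n` as a Strings and Coins position. -/
def cyclePos (n : ℕ) : SCPos ℕ :=
  ⟨Finset.range n, ((List.range n).map (fun i => (i, (i + 1) % n)) : List (ℕ × ℕ))⟩

/-- The friendship graph `F_n`: `n` triangles sharing the common vertex `0`. -/
def friendshipPos (n : ℕ) : SCPos ℕ :=
  ⟨Finset.range (2 * n + 1),
   (((List.range n).flatMap fun i =>
      [(0, 2 * i + 1), (0, 2 * i + 2), (2 * i + 1, 2 * i + 2)]) : List (ℕ × ℕ))⟩

/-- The pinwheel graph `PW_n`: `n` copies of `C_4` sharing the common vertex `0`. -/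
def pinwheelPos (n : ℕ) : SCPos ℕ :=
  ⟨Finset.range (3 * n + 1),
   (((List.range n).flatMap fun i =>
      [(0, 3 * i + 1), (3 * i + 1, 3 * i + 2), (3 * i + 2, 3 * i + 3), (3 * i + 3, 0)]) :
     List (ℕ × ℕ))⟩

/-- The loopy star `L_n`: center `0`, outer vertices `1, …, n`, each joined to the
center by an edge and carrying one loop. -/
def loopyStarPos (n : ℕ) : SCPos ℕ :=
  ⟨Finset.range (n + 1),
   (((List.range n).flatMap fun i => [(0, i + 1), (i + 1, i + 1)]) : List (ℕ × ℕ))⟩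

/-- The double loopy star `L(n,2)`: center `0`, outer vertices `1, …, n`, each joined
to the center by an edge and carrying two loops. -/
def doubleLoopyStarPos (n : ℕ) : SCPos ℕ :=
  ⟨Finset.range (n + 1),
   (((List.range n).flatMap fun i => [(0, i + 1), (i + 1, i + 1), (i + 1, i + 1)]) :
     List (ℕ × ℕ))⟩

/-- The complete bipartite graph `K(1, b)` (a star with `b` leaves). -/
def starPos (b : ℕ) : SCPos ℕ :=
  ⟨Finset.range (b + 1), (((List.range b).map fun i => (0, i + 1)) : List (ℕ × ℕ))⟩

/-- The complete bipartite graph `K(2, b)`: part `{0, 1}` and part `{2, …, b+1}`. -/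
def k2bPos (b : ℕ) : SCPos ℕ :=
  ⟨Finset.range (b + 2),
   (((List.range b).flatMap fun j => [(0, j + 2), (1, j + 2)]) : List (ℕ × ℕ))⟩

/-- The balloon path `BP_n`: a path on vertices `0, …, n-1` with one loop at each vertex. -/
def balloonPathPos (n : ℕ) : SCPos ℕ :=
  ⟨Finset.range n,
   ((((List.range (n - 1)).map fun i => (i, i + 1)) ++
     ((List.range n).map fun i => (i, i))) : List (ℕ × ℕ))⟩

/-- The loopy cycle `C_(n,1)`: the cycle `C_n` with one extra loop at vertex `0`. -/
def loopyCyclePos (n : ℕ) : SCPos ℕ :=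
  ⟨Finset.range n, (0, 0) ::ₘ (cyclePos n).edges⟩

/-- The Strings and Coins position of a finite simple graph: all vertices,
and one (arbitrarily oriented) edge for each edge of the graph. -/
noncomputable def posOfGraph {W : Type} [Fintype W] [DecidableEq W]
    (G : SimpleGraph W) [DecidableRel G.Adj] : SCPos W :=
  ⟨Finset.univ, G.edgeFinset.val.map Quot.out⟩


/-!
A captured vertex is one that loses its last edge, so the two optimal scores of a position always
add up to the number of its vertices that still carry an edge; in particular the number of
vertices a move captures is the drop in that count. On a path of `m < n` consecutive cycle edges
the mover takes an end edge, captures a vertex and moves again, so by induction he sweeps all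
`m + 1` vertices. On the cycle no move captures anything, and every move hands the opponent such
a path through all `n` vertices.
-/

def maxFst (best o : ℕ × ℕ) : ℕ × ℕ := if best.1 ≤ o.1 then o else best

theorem maxFst_fst (b o : ℕ × ℕ) : (maxFst b o).1 = max b.1 o.1 := by
  unfold maxFst
  split_ifs with h
  · exact (max_eq_right h).symm
  · exact (max_eq_left (by omega)).symm

theorem foldl_maxFst_eq_or_mem (l : List (ℕ × ℕ)) (b : ℕ × ℕ) :
    l.foldl maxFst b = b ∨ l.foldl maxFst b ∈ l := by
  induction l generalizing b with
  | nil => exact Or.inl rfl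
  | cons a t ih =>
    rcases ih (maxFst b a) with h | h
    · rw [List.foldl_cons, h]
      unfold maxFst
      split_ifs
      · exact Or.inr List.mem_cons_self
      · exact Or.inl rfl
    · exact Or.inr (List.mem_cons_of_mem a h)

theorem foldl_maxFst_zero_mem {l : List (ℕ × ℕ)} (hl : l ≠ []) :
    l.foldl maxFst (0, 0) ∈ l := by
  obtain ⟨a, t, rfl⟩ := List.exists_cons_of_ne_nil hl
  rw [List.foldl_cons, show maxFst (0, 0) a = a from if_pos (Nat.zero_le _)]
  rcases foldl_maxFst_eq_or_mem t a with h | h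
  · rw [h]
    exact List.mem_cons_self
  · exact List.mem_cons_of_mem a h

theorem le_foldl_maxFst_fst (l : List (ℕ × ℕ)) (b : ℕ × ℕ) :
    b.1 ≤ (l.foldl maxFst b).1 := by
  induction l generalizing b with
  | nil => exact le_rfl
  | cons a t ih => exact (maxFst_fst b a ▸ le_max_left _ _).trans (ih _)

theorem le_foldl_maxFst_of_mem {l : List (ℕ × ℕ)} {o : ℕ × ℕ} (b : ℕ × ℕ) (h : o ∈ l) :
    o.1 ≤ (l.foldl maxFst b).1 := by
  induction l generalizing b with
  | nil => simp at h
  | cons a t ih =>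
    rcases List.mem_cons.mp h with rfl | h
    · exact (maxFst_fst b o ▸ le_max_right _ _).trans (le_foldl_maxFst_fst t _)
    · exact ih _ h

namespace SCPos

noncomputable def outcome (p : SCPos V) (e : V × V) : ℕ × ℕ :=
  if p.caps e = 0 then ((p.remove e).score.2, (p.remove e).score.1)
  else ((p.remove e).score.1 + p.caps e, (p.remove e).score.2)

theorem score_eq_foldl (p : SCPos V) (h : p.edges ≠ 0) :
    p.score = (p.edges.toList.attach.map fun e => p.outcome e.1).foldl maxFst (0, 0) := by
  rw [score, dif_neg h]
  rfl

theorem score_of_edges_eq_zero {p : SCPos V} (h : p.edges = 0) : p.score = (0, 0) := by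
  rw [score, dif_pos h]

theorem exists_score_eq_outcome (p : SCPos V) (h : p.edges ≠ 0) :
    ∃ e ∈ p.edges, p.score = p.outcome e := by
  have hl : (p.edges.toList.attach.map fun e => p.outcome e.1) ≠ [] := by simpa using h
  have hmem := foldl_maxFst_zero_mem hl
  rw [← p.score_eq_foldl h] at hmem
  obtain ⟨e, -, he⟩ := List.mem_map.mp hmem
  exact ⟨e.1, Multiset.mem_toList.mp e.2, he.symm⟩

theorem outcome_fst_le_score_fst {p : SCPos V} {e : V × V} (he : e ∈ p.edges) :
    (p.outcome e).1 ≤ p.score.1 := by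
  rw [p.score_eq_foldl (ne_of_mem_of_not_mem' he (Multiset.notMem_zero e))]
  exact le_foldl_maxFst_of_mem _
    (List.mem_map.mpr ⟨⟨e, Multiset.mem_toList.mpr he⟩, List.mem_attach _ _, rfl⟩)

theorem score_eq_of_forall_outcome_eq {p : SCPos V} {o : ℕ × ℕ} (h : p.edges ≠ 0)
    (ho : ∀ e ∈ p.edges, p.outcome e = o) : p.score = o := by
  obtain ⟨e, he, hs⟩ := p.exists_score_eq_outcome h
  rw [hs, ho e he]

def liveVerts (p : SCPos V) : Finset V := p.verts.filter fun v => p.deg v ≠ 0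

theorem mem_liveVerts {p : SCPos V} {v : V} :
    v ∈ p.liveVerts ↔ v ∈ p.verts ∧ p.deg v ≠ 0 :=
  Finset.mem_filter

theorem remove_verts (p : SCPos V) (e : V × V) : (p.remove e).verts = p.verts := rfl

theorem remove_edges (p : SCPos V) (e : V × V) : (p.remove e).edges = p.edges.erase e := rfl

theorem deg_ne_zero_iff {p : SCPos V} {v : V} :
    p.deg v ≠ 0 ↔ ∃ e ∈ p.edges, e.1 = v ∨ e.2 = v := by
  rw [deg, Ne, Multiset.card_eq_zero, Multiset.filter_eq_nil]
  simp only [not_forall, not_not, exists_prop]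

theorem liveVerts_remove_subset (p : SCPos V) (e : V × V) :
    (p.remove e).liveVerts ⊆ p.liveVerts := by
  intro v hv
  simp only [mem_liveVerts, remove_verts, remove_edges, deg_ne_zero_iff] at hv ⊢
  obtain ⟨hv, f, hf, hfv⟩ := hv
  exact ⟨hv, f, Multiset.mem_of_mem_erase hf, hfv⟩

theorem caps_eq_card_sdiff {p : SCPos V} {e : V × V} (he : e ∈ p.edges) :
    p.caps e = (p.liveVerts \ (p.remove e).liveVerts).card := by
  refine congrArg Finset.card (Finset.ext fun v => ?_)
  simp only [Finset.mem_filter, Finset.mem_sdiff, mem_liveVerts, remove_verts, not_and,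
    not_not]
  constructor
  · rintro ⟨hv, hend, h0⟩
    refine ⟨⟨hv, deg_ne_zero_iff.mpr ⟨e, he, hend.imp Eq.symm Eq.symm⟩⟩, fun _ => h0⟩
  · rintro ⟨⟨hv, hd⟩, h0⟩
    refine ⟨hv, ?_, h0 hv⟩
    by_contra hend
    obtain ⟨f, hf, hfv⟩ := deg_ne_zero_iff.mp hd
    have hfe : f ≠ e := by rintro rfl; exact hend (hfv.imp Eq.symm Eq.symm)
    exact deg_ne_zero_iff.mpr ⟨f, Multiset.mem_erase_of_ne hfe |>.mpr hf, hfv⟩ (h0 hv)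

theorem caps_add_card_liveVerts_remove {p : SCPos V} {e : V × V} (he : e ∈ p.edges) :
    p.caps e + (p.remove e).liveVerts.card = p.liveVerts.card := by
  rw [caps_eq_card_sdiff he, Finset.card_sdiff_add_card_eq_card (liveVerts_remove_subset p e)]

theorem score_fst_add_snd (p : SCPos V) : p.score.1 + p.score.2 = p.liveVerts.card := by
  by_cases h : p.edges = 0
  · rw [score_of_edges_eq_zero h]
    simp [liveVerts, deg, h]
  · obtain ⟨e, he, hs⟩ := p.exists_score_eq_outcome h
    have ih := (p.remove e).score_fst_add_snd
    have hc := caps_add_card_liveVerts_remove he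
    rw [hs, outcome]
    split_ifs <;> dsimp only <;> omega
termination_by p.edges.card
decreasing_by exact Multiset.card_erase_lt_of_mem he

theorem score_eq_of_caps_ne_zero {p : SCPos V} {e : V × V} (he : e ∈ p.edges)
    (hc : p.caps e ≠ 0) (hr : (p.remove e).score = ((p.remove e).liveVerts.card, 0)) :
    p.score = (p.liveVerts.card, 0) := by
  have hle := outcome_fst_le_score_fst he
  rw [outcome, if_neg hc, hr, add_comm, caps_add_card_liveVerts_remove he] at hle
  have hsum := p.score_fst_add_snd
  ext <;> dsimp only <;> omega

end SCPos

def cycleEdge (n i : ℕ) : ℕ × ℕ := (i % n, (i + 1) % n)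

theorem cycleEdge_add_self (n i : ℕ) : cycleEdge n (i + n) = cycleEdge n i := by
  simp [cycleEdge, Nat.add_right_comm i n 1]

def cycleArc (n k m : ℕ) : SCPos ℕ :=
  ⟨Finset.range n, ((List.range m).map fun j => cycleEdge n (k + j) : List (ℕ × ℕ))⟩

theorem cycleArc_edges_succ (n k m : ℕ) :
    (cycleArc n k (m + 1)).edges = cycleEdge n k ::ₘ (cycleArc n (k + 1) m).edges := by
  simp only [cycleArc, List.range_succ_eq_map, List.map_cons, List.map_map, Multiset.cons_coe]
  congr 3
  funext j
  simp [Nat.add_comm j 1, Nat.add_assoc]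

theorem cycleArc_edges_succ_eq_add (n k m : ℕ) :
    (cycleArc n k (m + 1)).edges = (cycleArc n k m).edges + {cycleEdge n (k + m)} := by
  simp only [cycleArc, List.range_succ, List.map_append, List.map_singleton, ← Multiset.coe_add]
  rfl

theorem cycleArc_remove_head (n k m : ℕ) :
    (cycleArc n k (m + 1)).remove (cycleEdge n k) = cycleArc n (k + 1) m := by
  simp only [SCPos.remove, cycleArc_edges_succ, Multiset.erase_cons_head]
  rfl

theorem mem_cycleArc_edges {n k m : ℕ} {f : ℕ × ℕ} :
    f ∈ (cycleArc n k m).edges ↔ ∃ j < m, cycleEdge n (k + j) = f := by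
  simp [cycleArc]

theorem cycleArc_deg_ne_zero_iff {n k m : ℕ} (hm : 1 ≤ m) (v : ℕ) :
    (cycleArc n k m).deg v ≠ 0 ↔ ∃ j < m + 1, (k + j) % n = v := by
  simp only [SCPos.deg_ne_zero_iff, mem_cycleArc_edges]
  constructor
  · rintro ⟨_, ⟨j, hj, rfl⟩, h | h⟩
    · exact ⟨j, by omega, h⟩
    · exact ⟨j + 1, by omega, h⟩
  · rintro ⟨j, hj, rfl⟩
    obtain hjm | rfl := Nat.lt_or_eq_of_le (Nat.le_of_lt_succ hj)
    · exact ⟨_, ⟨j, hjm, rfl⟩, Or.inl rfl⟩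
    · refine ⟨_, ⟨j - 1, by omega, rfl⟩, Or.inr ?_⟩
      simp [cycleEdge, show k + (j - 1) + 1 = k + j by omega]

theorem liveVerts_cycleArc_zero (n k : ℕ) : (cycleArc n k 0).liveVerts = ∅ := by
  simp [SCPos.liveVerts, SCPos.deg, cycleArc]

theorem card_liveVerts_cycleArc {n k m : ℕ} (hm : 1 ≤ m) (hmn : m < n) :
    (cycleArc n k m).liveVerts.card = m + 1 := by
  have hlive : (cycleArc n k m).liveVerts = (Finset.range (m + 1)).image fun j => (k + j) % n := by
    ext v
    simp only [SCPos.mem_liveVerts, cycleArc_deg_ne_zero_iff hm, Finset.mem_image,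
      Finset.mem_range]
    constructor
    · exact fun h => h.2
    · rintro ⟨j, hj, rfl⟩
      exact ⟨Finset.mem_range.mpr (Nat.mod_lt _ (by omega)), j, hj, rfl⟩
  rw [hlive, Finset.card_image_of_injOn, Finset.card_range]
  intro a ha b hb hab
  simp only [Finset.coe_range, Set.mem_Iio] at ha hb
  exact Nat.ModEq.eq_of_lt_of_lt (Nat.ModEq.add_left_cancel' k hab) (by omega) (by omega)

theorem score_cycleArc {n m : ℕ} (hmn : m < n) (k : ℕ) :
    (cycleArc n k m).score = ((cycleArc n k m).liveVerts.card, 0) := by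
  induction m generalizing k with
  | zero =>
    rw [SCPos.score_of_edges_eq_zero rfl, liveVerts_cycleArc_zero, Finset.card_empty]
  | succ m ih =>
    have he : cycleEdge n k ∈ (cycleArc n k (m + 1)).edges := by
      rw [cycleArc_edges_succ]
      exact Multiset.mem_cons_self _ _
    have hcons := SCPos.caps_add_card_liveVerts_remove he
    rw [cycleArc_remove_head, card_liveVerts_cycleArc (by omega) hmn] at hcons
    refine SCPos.score_eq_of_caps_ne_zero he ?_
      (by rw [cycleArc_remove_head]; exact ih (by omega) _)
    rcases Nat.eq_zero_or_pos m with rfl | hm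
    · rw [liveVerts_cycleArc_zero, Finset.card_empty] at hcons
      omega
    · rw [card_liveVerts_cycleArc hm (by omega)] at hcons
      omega

theorem cycleArc_rotate {n : ℕ} (hn : n ≠ 0) (k : ℕ) :
    cycleArc n (k + 1) n = cycleArc n k n := by
  obtain ⟨m, rfl⟩ := Nat.exists_eq_succ_of_ne_zero hn
  have h : (cycleArc (m + 1) (k + 1) (m + 1)).edges = (cycleArc (m + 1) k (m + 1)).edges := by
    rw [cycleArc_edges_succ_eq_add, cycleArc_edges_succ, show k + 1 + m = k + (m + 1) by omega,
      cycleEdge_add_self, add_comm, Multiset.singleton_add]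
  exact congrArg (SCPos.mk (Finset.range (m + 1))) h

theorem cyclePos_eq_cycleArc {n : ℕ} (hn : n ≠ 0) (k : ℕ) : cyclePos n = cycleArc n k n := by
  induction k with
  | zero =>
    refine congrArg (SCPos.mk (Finset.range n)) (congrArg _ (List.map_congr_left fun j hj => ?_))
    simp [cycleEdge, Nat.mod_eq_of_lt (List.mem_range.mp hj)]
  | succ k ih => rw [cycleArc_rotate hn, ih]

theorem outcome_cyclePos {n : ℕ} (hn : 2 ≤ n) {e : ℕ × ℕ} (he : e ∈ (cyclePos n).edges) :
    (cyclePos n).outcome e = (0, n) := by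
  obtain ⟨m, rfl⟩ := Nat.exists_eq_add_of_le' (show 1 ≤ n by omega)
  have he' : e ∈ (cycleArc (m + 1) 0 (m + 1)).edges :=
    cyclePos_eq_cycleArc (n := m + 1) (by omega) 0 ▸ he
  obtain ⟨j, -, rfl⟩ := mem_cycleArc_edges.mp he'
  rw [zero_add] at he ⊢
  have hrem : (cyclePos (m + 1)).remove (cycleEdge (m + 1) j) = cycleArc (m + 1) (j + 1) m := by
    rw [cyclePos_eq_cycleArc (n := m + 1) (by omega) j, cycleArc_remove_head]
  have hlive : (cycleArc (m + 1) (j + 1) m).liveVerts.card = m + 1 :=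
    card_liveVerts_cycleArc (by omega) (by omega)
  have hcaps : (cyclePos (m + 1)).caps (cycleEdge (m + 1) j) = 0 := by
    have hcons := SCPos.caps_add_card_liveVerts_remove he
    have hle : (cyclePos (m + 1)).liveVerts.card ≤ m + 1 :=
      (Finset.card_filter_le _ _).trans_eq (Finset.card_range _)
    rw [hrem, hlive] at hcons
    omega
  rw [SCPos.outcome, if_pos hcaps, hrem, score_cycleArc (by omega), hlive]

theorem score_cyclePos {n : ℕ} (hn : 2 ≤ n) : (cyclePos n).score = (0, n) := by
  refine SCPos.score_eq_of_forall_outcome_eq ?_ fun e he => outcome_cyclePos hn he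
  simp [cyclePos]
  omega

/-- On the cycle `C_n` (`n ≥ 3`), the second player captures all `n` vertices. -/
theorem stmt1 (n : ℕ) (hn : 3 ≤ n) : (cyclePos n).score = (0, n) :=
  score_cyclePos (by omega)
end

section
/- In Strings and Coins played on a forest in which every component contains at least one edge, the first player can capture all vertices of positive degree. -/
variable {V : Type} [DecidableEq V]

/-!
Call a position peelable if its edges join vertices of the board and every nonempty
submultiset of its edges has a vertex meeting exactly one of them. A forest is peelable,
since the first vertex of a longest path in a nonempty forest is a leaf, and removing an
edge keeps a position peelable. In a peelable position the mover removes a pendant edge,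
captures its leaf and moves again, so by induction on the number of edges every option is
either "all remaining vertices to the mover" or "all to the opponent", and the former occurs.
-/

namespace List

variable {α β : Type*} [LinearOrder α]

theorem foldl_max_fst_mem (L : List (α × β)) (acc : α × β) :
    L.foldl (fun best o => if best.1 ≤ o.1 then o else best) acc ∈ acc :: L := by
  induction L generalizing acc with
  | nil => exact mem_singleton_self acc
  | cons x L ih =>
    have := ih (if acc.1 ≤ x.1 then x else acc)
    split_ifs at this <;> grind

theorem le_foldl_max_fst (L : List (α × β)) (acc : α × β) :
    ∀ x ∈ acc :: L,
      x.1 ≤ (L.foldl (fun best o => if best.1 ≤ o.1 then o else best) acc).1 := by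
  induction L generalizing acc with
  | nil => simp
  | cons x L ih =>
    have := ih (if acc.1 ≤ x.1 then x else acc)
    split_ifs at this <;> grind

theorem foldl_max_fst_eq_of_forall_mem {L : List (ℕ × ℕ)} {k : ℕ}
    (hL : ∀ x ∈ L, x = (0, k) ∨ x = (k, 0)) (hk : (k, 0) ∈ L) :
    L.foldl (fun best o => if best.1 ≤ o.1 then o else best) (0, 0) = (k, 0) := by
  have hmem := foldl_max_fst_mem L (0, 0)
  have hle := le_foldl_max_fst L (0, 0) _ (mem_cons_of_mem _ hk)
  generalize L.foldl _ (0, 0) = r at hmem hle ⊢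
  rcases mem_cons.mp hmem with rfl | hr
  · simp_all
  · rcases hL r hr with rfl | rfl <;> simp_all

end List

namespace SimpleGraph

open Finset

variable {W : Type*} {G : SimpleGraph W}

theorem IsAcyclic.exists_degree_eq_one [Finite G.edgeSet] [G.LocallyFinite] (hG : G.IsAcyclic)
    (hne : G.edgeSet.Nonempty) : ∃ v, G.degree v = 1 := by
  obtain ⟨e, he⟩ := hne
  induction e using Sym2.ind with | _ a b => ?_
  rw [mem_edgeSet] at he
  have : Nonempty W := ⟨a⟩
  obtain ⟨u, v, p, hp, hmax⟩ := Walk.exists_isPath_forall_isPath_length_le_length G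
  have hnil : ¬p.Nil := fun hnil => by
    have := hmax a b (.cons he .nil) (Path.singleton he).2
    rw [Walk.length_eq_zero_iff.mpr hnil, Walk.length_cons] at this
    omega
  refine ⟨u, degree_eq_one_iff_existsUnique_adj.mpr ⟨_, p.adj_snd hnil, fun w hadj => ?_⟩⟩
  refine hG.eq_snd_of_adj_start hp hadj (not_not.mp fun hw => ?_)
  have := hmax w v (p.cons hadj.symm) (hp.cons hw)
  simp at this

theorem IsAcyclic.exists_card_filter_mem_eq_one [DecidableEq W] (hG : G.IsAcyclic)
    {E : Finset (Sym2 W)} (hE : (E : Set (Sym2 W)) ⊆ G.edgeSet) (hne : E.Nonempty) :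
    ∃ v, #{e ∈ E | v ∈ e} = 1 := by
  set H := fromEdgeSet (E : Set (Sym2 W))
  have hHE : H.edgeSet = E := by
    rw [edgeSet_fromEdgeSet]
    exact sdiff_eq_left.mpr <| Set.disjoint_left.mpr fun e he => G.not_isDiag_of_mem_edgeSet (hE he)
  have : Fintype H.edgeSet := by rw [hHE]; infer_instance
  have : H.LocallyFinite := fun v =>
    have : Finite (H.neighborSet v) :=
      Finite.of_injective (fun w => (⟨s(v, w), w.2⟩ : H.edgeSet)) fun w w' h =>
        Subtype.ext (Sym2.congr_right.mp (congrArg Subtype.val h))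
    Fintype.ofFinite _
  have hH : H.IsAcyclic := hG.anti ((fromEdgeSet_le G).mpr (Set.sdiff_subset.trans hE))
  obtain ⟨v, hv⟩ := hH.exists_degree_eq_one (by rw [hHE]; exact hne)
  refine ⟨v, ?_⟩
  rw [← hv, ← card_incidenceFinset_eq_degree, incidenceFinset_eq_filter]
  congr 2
  ext e
  rw [mem_edgeFinset, hHE, mem_coe]

theorem map_uncurry_mk_map_out_edgeFinset (G : SimpleGraph W) [Fintype G.edgeSet] :
    (G.edgeFinset.val.map Quot.out).map Sym2.mk.uncurry = G.edgeFinset.val := by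
  rw [Multiset.map_map]
  exact (Multiset.map_congr rfl fun e _ => Quot.out_eq e).trans (Multiset.map_id _)

end SimpleGraph

namespace SCPos

def uncaptured (p : SCPos V) : Finset V := p.verts.filter fun v => p.deg v ≠ 0

structure Peelable (p : SCPos V) : Prop where
  endpoints_mem : ∀ e ∈ p.edges, e.1 ∈ p.verts ∧ e.2 ∈ p.verts
  exists_deg_eq_one : ∀ S ≤ p.edges, S ≠ 0 → ∃ v, (mk p.verts S).deg v = 1

section

variable {p : SCPos V} {e : V × V}

@[simp] theorem verts_remove : (p.remove e).verts = p.verts := rfl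

theorem deg_ne_zero_of_mem {v : V} (he : e ∈ p.edges) (hv : e.1 = v ∨ e.2 = v) :
    p.deg v ≠ 0 :=
  (Multiset.card_pos_iff_exists_mem.mpr ⟨e, Multiset.mem_filter.mpr ⟨he, hv⟩⟩).ne'

theorem Peelable.remove (hp : p.Peelable) (e : V × V) : (p.remove e).Peelable :=
  ⟨fun f hf => hp.endpoints_mem f (Multiset.mem_of_mem_erase hf),
   fun S hS => hp.exists_deg_eq_one S (hS.trans (Multiset.erase_le e p.edges))⟩

theorem deg_eq_deg_remove_add (he : e ∈ p.edges) (v : V) :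
    p.deg v = (p.remove e).deg v + if e.1 = v ∨ e.2 = v then 1 else 0 := by
  rw [deg, deg, remove, ← Multiset.cons_erase he, Multiset.filter_cons, Multiset.erase_cons_head]
  split_ifs <;> simp [add_comm]

theorem card_uncaptured_remove_add_caps (he : e ∈ p.edges) :
    (p.remove e).uncaptured.card + p.caps e = p.uncaptured.card := by
  rw [uncaptured, uncaptured, caps, verts_remove, ← Finset.card_union_of_disjoint
    (Finset.disjoint_filter.mpr fun _ _ h h' => h h'.2), ← Finset.filter_or]
  congr 1
  refine Finset.filter_congr fun v _ => ?_
  have := deg_eq_deg_remove_add he v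
  split_ifs at this <;> grind

theorem Peelable.exists_caps_ne_zero (hp : p.Peelable) (h0 : p.edges ≠ 0) :
    ∃ e ∈ p.edges, p.caps e ≠ 0 := by
  obtain ⟨v, hv⟩ := hp.exists_deg_eq_one p.edges le_rfl h0
  replace hv : p.deg v = 1 := hv
  obtain ⟨e, he⟩ := Multiset.card_eq_one.mp hv
  have hmem := Multiset.mem_filter.mp (he ▸ Multiset.mem_singleton_self e)
  have hdeg := deg_eq_deg_remove_add hmem.1 v
  rw [if_pos hmem.2] at hdeg
  have hv_mem : v ∈ p.verts := by
    rcases hmem.2 with h | h <;> simp [← h, hp.endpoints_mem e hmem.1]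
  refine ⟨e, hmem.1, Finset.card_ne_zero.mpr ⟨v, Finset.mem_filter.mpr
    ⟨hv_mem, hmem.2.imp Eq.symm Eq.symm, by omega⟩⟩⟩

end

theorem Peelable.score_eq {p : SCPos V} (hp : p.Peelable) : p.score = (p.uncaptured.card, 0) := by
  rw [score]
  split_ifs with h0
  · simp [uncaptured, deg, h0]
  have hoption : ∀ e ∈ p.edges,
      (let s := (p.remove e).score
       let c := p.caps e
       if c = 0 then (s.2, s.1) else (s.1 + c, s.2))
        = if p.caps e = 0 then (0, p.uncaptured.card) else (p.uncaptured.card, 0) := by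
    intro e he
    have hcard := card_uncaptured_remove_add_caps he
    dsimp only
    rw [(hp.remove e).score_eq]
    split_ifs with hc
    · rw [hc, add_zero] at hcard
      rw [hcard]
    · rw [hcard]
  obtain ⟨e₀, he₀, hc₀⟩ := hp.exists_caps_ne_zero h0
  refine List.foldl_max_fst_eq_of_forall_mem ?_ ?_
  · intro x hx
    obtain ⟨⟨e, he⟩, -, rfl⟩ := List.mem_map.mp hx
    dsimp only
    rw [hoption e (Multiset.mem_toList.mp he)]
    split_ifs <;> simp
  · refine List.mem_map.mpr
      ⟨⟨e₀, Multiset.mem_toList.mpr he₀⟩, List.mem_attach _ _, ?_⟩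
    dsimp only
    rw [hoption e₀ he₀, if_neg hc₀]
termination_by p.edges.card
decreasing_by exact Multiset.card_erase_lt_of_mem he

theorem deg_mk_eq_card_filter_mem (X : Finset V) (S : Multiset (V × V)) (v : V) :
    (mk X S).deg v = ((S.map Sym2.mk.uncurry).filter (v ∈ ·)).card := by
  rw [deg, Multiset.filter_map, Multiset.card_map]
  congr 1
  exact Multiset.filter_congr fun ⟨a, b⟩ _ => by simp [eq_comm]

variable [Fintype V] {G : SimpleGraph V} [DecidableRel G.Adj]

theorem deg_mk_map_out_edgeFinset (X : Finset V) (v : V) :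
    (mk X (G.edgeFinset.val.map Quot.out)).deg v = G.degree v := by
  rw [deg_mk_eq_card_filter_mem, G.map_uncurry_mk_map_out_edgeFinset,
    ← G.card_incidenceFinset_eq_degree, G.incidenceFinset_eq_filter]
  rfl

theorem peelable_of_isAcyclic (hG : G.IsAcyclic) :
    (mk (Finset.univ.filter fun v => 0 < G.degree v) (G.edgeFinset.val.map Quot.out)).Peelable := by
  refine ⟨fun f hf => ?_, fun S hS hS0 => ?_⟩
  · have h₁ := deg_ne_zero_of_mem hf (.inl rfl)
    have h₂ := deg_ne_zero_of_mem hf (.inr rfl)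
    rw [deg_mk_map_out_edgeFinset] at h₁ h₂
    simp [pos_iff_ne_zero, h₁, h₂]
  have hSG : S.map Sym2.mk.uncurry ≤ G.edgeFinset.val :=
    G.map_uncurry_mk_map_out_edgeFinset ▸ Multiset.map_le_map hS
  obtain ⟨v, hv⟩ := hG.exists_card_filter_mem_eq_one
    (E := ⟨_, Multiset.nodup_of_le hSG G.edgeFinset.nodup⟩)
    (fun e he => G.mem_edgeFinset.mp (Multiset.mem_of_le hSG he))
    (Finset.nonempty_mk.mpr (Multiset.map_eq_zero.not.mpr hS0))
  exact ⟨v, (deg_mk_eq_card_filter_mem _ _ v).trans hv⟩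

end SCPos

/-- On any finite forest, the first player captures all vertices of positive degree
(components that are isolated vertices contribute nothing). -/
theorem stmt2 {V : Type} [Fintype V] [DecidableEq V] (G : SimpleGraph V)
    [DecidableRel G.Adj] (hF : G.IsAcyclic) :
    (SCPos.mk (Finset.univ.filter fun v => 0 < G.degree v)
        (G.edgeFinset.val.map Quot.out)).score
      = ((Finset.univ.filter fun v : V => 0 < G.degree v).card, 0) := by
  rw [(SCPos.peelable_of_isAcyclic hF).score_eq, SCPos.uncaptured]
  congr 2
  refine Finset.filter_true_of_mem fun v hv => ?_
  rw [SCPos.deg_mk_map_out_edgeFinset]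
  exact (Finset.mem_filter.mp hv).2.ne'
end
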